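/- If L: C̄ → C̄[W^{-1}] is an orthogonal localization, then the pullback functor L*: FT(C̄[W^{-1}], P, r_i) → FT(C̄, P, r_i) is fully faithful, exhibiting FT(C̄[W^{-1}], P, r_i) as a full reflective subcategory of FT(C̄, P, r_i); i.e. the counit L_! L* A → A is a natural isomorphism. -/

import Mathlib

universe u v

open CategoryTheory

namespace AQFT

/-! ### Basic combinatorics of lists of colors -/

/-- Concatenation of a finite family of lists of colors. -/
def concat {C : Type u} : {n : ℕ} → (Fin n → List C) → List C
  | 0, _ => []
  | _ + 1, bs => bs 0 ++ concat fun i => bs i.succ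

lemma concat_length {C : Type u} : ∀ {n : ℕ} (bs : Fin n → List C),
    (concat bs).length = ∑ i, (bs i).length
  | 0, bs => by simp [concat]
  | n + 1, bs => by
    simp [concat, List.length_append, concat_length (fun i => bs i.succ), Fin.sum_univ_succ]

/-- The position in `concat bs` at which the `i`-th block starts. -/
def offset {C : Type u} {n : ℕ} (bs : Fin n → List C) (i : ℕ) : ℕ :=
  (((List.ofFn bs).take i).flatten).length

/-- "Dependent flatten": combine families indexed by the blocks into a family
indexed by the concatenation. -/
def dconcat {C : Type u} {P : C → Type v} : {n : ℕ} → (bs : Fin n → List C) →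
    (∀ i, ∀ r : Fin (bs i).length, P ((bs i).get r)) →
    ∀ j : Fin (concat bs).length, P ((concat bs).get j)
  | 0, _, _, j => j.elim0
  | n + 1, bs, h, j =>
    if hj : (j : ℕ) < (bs 0).length then
      have hg : (concat bs).get j = (bs 0).get ⟨j, hj⟩ := by
        simp only [List.get_eq_getElem]
        simp [concat, List.get_eq_getElem, List.getElem_append, hj]
      cast ((congrArg P hg).symm) (h 0 ⟨j, hj⟩)
    else
      have hlt : (j : ℕ) - (bs 0).length < (concat fun i => bs i.succ).length := by
        have := j.isLt
        simp only [concat, List.length_append] at this ⊢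
        omega
      have hg : (concat bs).get j =
          (concat fun i => bs i.succ).get ⟨(j : ℕ) - (bs 0).length, hlt⟩ := by
        simp only [List.get_eq_getElem]
        simp [concat, List.get_eq_getElem, List.getElem_append, hj]
      cast ((congrArg P hg).symm)
        (dconcat (fun i => bs i.succ) (fun i r => h i.succ r) ⟨(j : ℕ) - (bs 0).length, hlt⟩)

/-- A dependent family on a singleton list. -/
def sing {C : Type u} {P : C → Type v} {c : C} (x : P c) :
    ∀ i : Fin ([c].length), P ([c].get i) := fun i =>
  match i with
  | ⟨0, _⟩ => x
  | ⟨_ + 1, h⟩ => absurd h (by simp)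

/-- A dependent family on a two-element list. -/
def pairFam {C : Type u} {P : C → Type v} {c₁ c₂ : C} (x : P c₁) (y : P c₂) :
    ∀ i : Fin ([c₁, c₂].length), P ([c₁, c₂].get i) := fun i =>
  match i with
  | ⟨0, _⟩ => x
  | ⟨1, _⟩ => y
  | ⟨_ + 2, h⟩ => absurd h (by simp)

lemma punitList_eq : ∀ (l l' : List PUnit.{u+1}), l.length = l'.length → l = l'
  | [], [], _ => rfl
  | _ :: l, _ :: l', h => by
    simp only [List.length_cons, Nat.add_right_cancel_iff] at h
    rw [punitList_eq l l' h]
  | [], _ :: _, h => by simp at h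
  | _ :: _, [], h => by simp at h

/-! ### Colored operads in `Type u` ("`Set`") -/

/-- The underlying data of a `C`-colored (symmetric) operad in `Type u`:
operations, operadic units, composition and the symmetric group actions. -/
structure OperadData (C : Type u) : Type (u + 1) where
  Op : List C → C → Type u
  unit : ∀ c : C, Op [c] c
  comp : ∀ {cs : List C} {t : C}, Op cs t →
    ∀ {bs : Fin cs.length → List C},
      (∀ i : Fin cs.length, Op (bs i) (cs.get i)) → Op (concat bs) t
  act : ∀ {cs : List C} {t : C} (σ : Equiv.Perm (Fin cs.length)),
    Op cs t → Op (List.ofFn (fun i => cs.get (σ i))) t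

/-- A `C`-colored operad in `Type u`: data together with unitality,
associativity and a symmetry axiom (stated using `HEq`, since the color lists
of the two sides are only propositionally equal). -/
structure Operad (C : Type u) extends OperadData C : Type (u + 1) where
  comp_unit : ∀ {cs : List C} {t : C} (o : Op cs t),
    HEq (comp o (fun i => unit (cs.get i))) o
  unit_comp : ∀ {cs : List C} {t : C} (o : Op cs t)
    (p : ∀ i : Fin ([t].length), Op cs ([t].get i)),
    (∀ i, HEq (p i) o) → HEq (comp (unit t) p) o
  assoc : ∀ {cs : List C} {t : C} (o : Op cs t)
    {bs : Fin cs.length → List C} (p : ∀ i, Op (bs i) (cs.get i))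
    {ds : Fin (concat bs).length → List C}
    (q : ∀ j, Op (ds j) ((concat bs).get j))
    (e : ∀ (i : Fin cs.length), Fin (bs i).length → Fin (concat bs).length)
    (_ : ∀ i r, ((e i r : ℕ)) = offset bs i + r)
    {ds' : ∀ i : Fin cs.length, Fin (bs i).length → List C}
    (q' : ∀ (i : Fin cs.length) (r : Fin (bs i).length), Op (ds' i r) ((bs i).get r)),
    (∀ i r, HEq (q' i r) (q (e i r))) →
    HEq (comp (comp o p) q) (comp o (fun i => comp (p i) (q' i)))
  act_one : ∀ {cs : List C} {t : C} (o : Op cs t), HEq (act 1 o) o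

/-! ### Algebras over a colored operad (in `Type u`, the category `Set`) -/

/-- An algebra over a colored operad in `Type u`. -/
structure Algebra {C : Type u} (O : Operad C) : Type (u + 1) where
  X : C → Type u
  action : ∀ {cs : List C} {t : C}, O.Op cs t →
    (∀ i : Fin cs.length, X (cs.get i)) → X t
  action_unit : ∀ {c : C} (a : ∀ i : Fin ([c].length), X ([c].get i)),
    action (O.unit c) a = a ⟨0, Nat.one_pos⟩
  action_comp : ∀ {cs : List C} {t : C} (o : O.Op cs t)
    {bs : Fin cs.length → List C} (p : ∀ i, O.Op (bs i) (cs.get i))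
    (as : ∀ j : Fin (concat bs).length, X ((concat bs).get j))
    (e : ∀ (i : Fin cs.length), Fin (bs i).length → Fin (concat bs).length)
    (_ : ∀ i r, ((e i r : ℕ)) = offset bs i + r)
    (as' : ∀ (i : Fin cs.length) (r : Fin (bs i).length), X ((bs i).get r)),
    (∀ i r, HEq (as' i r) (as (e i r))) →
    action (O.comp o p) as = action o (fun i => action (p i) (as' i))
  action_act : ∀ {cs : List C} {t : C} (σ : Equiv.Perm (Fin cs.length)) (o : O.Op cs t)
    (as : ∀ j : Fin (List.ofFn (fun i => cs.get (σ i))).length,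
      X ((List.ofFn (fun i => cs.get (σ i))).get j))
    (e : Fin cs.length → Fin (List.ofFn (fun i => cs.get (σ i))).length)
    (_ : ∀ i, ((e i : ℕ)) = ((σ.symm i : ℕ)))
    (as' : ∀ i : Fin cs.length, X (cs.get i)),
    (∀ i, HEq (as' i) (as (e i))) →
    action (O.act σ o) as = action o as'

/-- Morphisms of algebras over a colored operad. -/
@[ext]
structure AlgebraHom {C : Type u} {O : Operad C} (A B : Algebra O) : Type u where
  app : ∀ c : C, A.X c → B.X c
  naturality : ∀ {cs : List C} {t : C} (o : O.Op cs t)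
    (as : ∀ i : Fin cs.length, A.X (cs.get i)),
    app t (A.action o as) = B.action o (fun i => app _ (as i))

instance {C : Type u} (O : Operad C) : Category (Algebra O) where
  Hom A B := AlgebraHom A B
  id A := ⟨fun _ a => a, fun _ _ => rfl⟩
  comp f g := ⟨fun c a => g.app c (f.app c a), by
    intro cs t o as
    show g.app t (f.app t _) = _
    rw [f.naturality, g.naturality]⟩
  id_comp f := rfl
  comp_id f := rfl
  assoc f g h := rfl

/-! ### Orthogonal categories and field theories -/

/-- An orthogonality relation on a category `C`: a symmetric relation on pairs
of morphisms with common target, closed under pre- and post-composition. -/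
structure OrthRel (C : Type u) [Category.{v} C] where
  rel : ∀ {c₁ c₂ t : C}, (c₁ ⟶ t) → (c₂ ⟶ t) → Prop
  symm : ∀ {c₁ c₂ t : C} {f₁ : c₁ ⟶ t} {f₂ : c₂ ⟶ t}, rel f₁ f₂ → rel f₂ f₁
  precomp : ∀ {c₁ c₁' c₂ t : C} (g : c₁' ⟶ c₁) {f₁ : c₁ ⟶ t} {f₂ : c₂ ⟶ t},
    rel f₁ f₂ → rel (g ≫ f₁) f₂
  postcomp : ∀ {c₁ c₂ t t' : C} (h : t ⟶ t') {f₁ : c₁ ⟶ t} {f₂ : c₂ ⟶ t},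
    rel f₁ f₂ → rel (f₁ ≫ h) (f₂ ≫ h)

/-- Einstein causality for a functor `F : C ⥤ Alg(P)` with respect to an
orthogonality relation `⊥` and two chosen arity-2 operations `r₁, r₂` of the
uncolored operad `P`: for `f₁ ⊥ f₂`, the images of `F(c₁)` and `F(c₂)`
"`r`-commute" in `F(t)`. -/
def IsCausal {C : Type u} [Category.{v} C] (orth : OrthRel C) {P : Operad.{u} PUnit}
    (r₁ r₂ : P.Op [PUnit.unit, PUnit.unit] PUnit.unit) (F : C ⥤ Algebra P) : Prop :=
  ∀ {c₁ c₂ t : C} (f₁ : c₁ ⟶ t) (f₂ : c₂ ⟶ t), orth.rel f₁ f₂ →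
    ∀ (x : (F.obj c₁).X PUnit.unit) (y : (F.obj c₂).X PUnit.unit),
      (F.obj t).action r₁
        (pairFam (P := (F.obj t).X) ((F.map f₁).app _ x) ((F.map f₂).app _ y)) =
      (F.obj t).action r₂
        (pairFam (P := (F.obj t).X) ((F.map f₁).app _ x) ((F.map f₂).app _ y))

/-- The category of field theories of type `(P, r₁, r₂)` on the orthogonal
category `(C, ⊥)`: functors `C ⥤ Alg(P)` satisfying Einstein causality. -/
abbrev FT (C : Type u) [Category.{v} C] (orth : OrthRel C) {P : Operad.{u} PUnit}
    (r₁ r₂ : P.Op [PUnit.unit, PUnit.unit] PUnit.unit) :=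
  ObjectProperty.FullSubcategory (IsCausal orth r₁ r₂)

/-- Pullback of field theories along an orthogonality-preserving functor. -/
def restrictFT {C : Type u} [Category.{v} C] {D : Type u} [Category.{v} D]
    {oC : OrthRel C} {oD : OrthRel D} {P : Operad.{u} PUnit}
    (r₁ r₂ : P.Op [PUnit.unit, PUnit.unit] PUnit.unit) (j : C ⥤ D)
    (horth : ∀ {c₁ c₂ t : C} (f₁ : c₁ ⟶ t) (f₂ : c₂ ⟶ t),
      oC.rel f₁ f₂ → oD.rel (j.map f₁) (j.map f₂)) :
    FT D oD r₁ r₂ ⥤ FT C oC r₁ r₂ :=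
  ObjectProperty.lift _
    (ObjectProperty.ι _ ⋙ (Functor.whiskeringLeft C D (Algebra P)).obj j)
    (fun A => by
      intro c₁ c₂ t f₁ f₂ hf x y
      exact A.property (j.map f₁) (j.map f₂) (horth f₁ f₂ hf) x y)

/-- The push-forward orthogonality relation `L_*(⊥)` on the localization
`C[W⁻¹]`: the orthogonality relation generated by the pairs
`(L(f₁), L(f₂))` for `f₁ ⊥ f₂`. -/
inductive locOrth {C : Type u} [SmallCategory C] (W : CategoryTheory.MorphismProperty C)
    (orth : OrthRel C) :
    ∀ {a b t : W.Localization}, (a ⟶ t) → (b ⟶ t) → Prop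
  | base {c₁ c₂ t : C} (f₁ : c₁ ⟶ t) (f₂ : c₂ ⟶ t) :
      orth.rel f₁ f₂ → locOrth W orth (W.Q.map f₁) (W.Q.map f₂)
  | symm {c₁ c₂ t : W.Localization} {f₁ : c₁ ⟶ t} {f₂ : c₂ ⟶ t} :
      locOrth W orth f₁ f₂ → locOrth W orth f₂ f₁
  | precomp {c₁ c₁' c₂ t : W.Localization} (g : c₁' ⟶ c₁) {f₁ : c₁ ⟶ t} {f₂ : c₂ ⟶ t} :
      locOrth W orth f₁ f₂ → locOrth W orth (g ≫ f₁) f₂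
  | postcomp {c₁ c₂ t t' : W.Localization} (h : t ⟶ t') {f₁ : c₁ ⟶ t} {f₂ : c₂ ⟶ t} :
      locOrth W orth f₁ f₂ → locOrth W orth (f₁ ≫ h) (f₂ ≫ h)

/-- The orthogonal localization `C̄[W⁻¹] = (C[W⁻¹], L_*(⊥))`. -/
def locOrthRel {C : Type u} [SmallCategory C] (W : CategoryTheory.MorphismProperty C)
    (orth : OrthRel C) : OrthRel W.Localization where
  rel := locOrth W orth
  symm := locOrth.symm
  precomp := locOrth.precomp
  postcomp := locOrth.postcomp

/-!
`L*` is fully faithful because precomposition with a localization functor is. For the left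
adjoint we use the general adjoint functor theorem. Limits of algebras, and hence of field
theories, are computed pointwise; causality survives because the limit projections are jointly
injective. For the solution set condition, every map `A ⟶ L* X` factors through the sub-theory
of `X` that is the image of the formal terms built from `A`, operations of `P` and morphisms of
`C[W⁻¹]`. Up to isomorphism this sub-theory depends only on the kernel of evaluating the terms,
and these kernels form a small set. Since `L*` is fully faithful, the counit of the adjunction
is an isomorphism.
-/

open Limits

namespace Algebra

variable {P : Operad.{u} PUnit}

abbrev sub (A : Algebra P) (S : Set (A.X PUnit.unit))
    (hS : ∀ {cs : List PUnit} (o : P.Op cs PUnit.unit) (as : ∀ i, A.X (cs.get i)),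
      (∀ i, as i ∈ S) → A.action o as ∈ S) : Algebra P where
  X _ := S
  action o as := ⟨A.action o fun i => (as i).1, hS o _ fun i => (as i).2⟩
  action_unit _ := Subtype.ext (A.action_unit _)
  action_comp {_ _} o {_} p _ e he as' h := Subtype.ext <|
    A.action_comp o p _ e he (fun i r => (as' i r).1)
      fun i r => heq_of_eq (congrArg Subtype.val (eq_of_heq (h i r)))
  action_act σ o _ e he as' h := Subtype.ext <|
    A.action_act σ o _ e he (fun i => (as' i).1)
      fun i => heq_of_eq (congrArg Subtype.val (eq_of_heq (h i)))

def sub.ι (A : Algebra P) (S : Set (A.X PUnit.unit))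
    (hS : ∀ {cs : List PUnit} (o : P.Op cs PUnit.unit) (as : ∀ i, A.X (cs.get i)),
      (∀ i, as i ∈ S) → A.action o as ∈ S) : A.sub S hS ⟶ A :=
  ⟨fun _ x => x.1, fun _ _ => rfl⟩

abbrev pi {ι : Type u} (A : ι → Algebra P) : Algebra P where
  X c := ∀ j, (A j).X c
  action o as j := (A j).action o fun i => as i j
  action_unit _ := funext fun j => (A j).action_unit _
  action_comp {_ _} o {_} p _ e he as' h := funext fun j =>
    (A j).action_comp o p _ e he (fun i r => as' i r j)
      fun i r => heq_of_eq (congrFun (eq_of_heq (h i r)) j)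
  action_act σ o _ e he as' h := funext fun j =>
    (A j).action_act σ o _ e he (fun i => as' i j)
      fun i => heq_of_eq (congrFun (eq_of_heq (h i)) j)

variable {J : Type u} [Category.{u} J]

def limitCone (K : J ⥤ Algebra P) : Cone K where
  pt := (pi K.obj).sub {s | ∀ ⦃j j'⦄ (φ : j ⟶ j'), (K.map φ).app _ (s j) = s j'}
    fun o as has j j' φ => by
      change (K.map φ).app _ ((K.obj j).action o _) = _
      rw [(K.map φ).naturality]
      exact congrArg _ (funext fun i => has i φ)
  π :=
    { app j := ⟨fun _ s => s.1 j, fun _ _ => rfl⟩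
      naturality j j' φ := AlgebraHom.ext (funext fun _ => funext fun s => (s.2 φ).symm) }

def limitConeIsLimit (K : J ⥤ Algebra P) : IsLimit (limitCone K) where
  lift c :=
    { app co x := ⟨fun j => (c.π.app j).app co x,
        fun _ _ φ => congrArg (fun q : AlgebraHom _ _ => q.app co x) (c.w φ)⟩
      naturality o as := Subtype.ext (funext fun j => (c.π.app j).naturality o as) }
  fac _ _ := rfl
  uniq _ _ hm := AlgebraHom.ext <| funext fun co => funext fun x => Subtype.ext <|
    funext fun j => congrArg (fun q : AlgebraHom _ _ => q.app co x) (hm j)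

instance : HasLimitsOfSize.{u, u} (Algebra P) :=
  ⟨fun _ _ => ⟨fun K => HasLimit.mk ⟨limitCone K, limitConeIsLimit K⟩⟩⟩

lemma eq_of_isLimit {K : J ⥤ Algebra P} {c : Cone K} (hc : IsLimit c)
    {x y : c.pt.X PUnit.unit} (h : ∀ j, (c.π.app j).app _ x = (c.π.app j).app _ y) : x = y := by
  let e := hc.conePointUniqueUpToIso (limitConeIsLimit K)
  have he : e.hom.app _ x = e.hom.app _ y := Subtype.ext <| funext fun j =>
    (congrArg (fun q : AlgebraHom _ _ => q.app _ x)
        (hc.conePointUniqueUpToIso_hom_comp (limitConeIsLimit K) j)).trans <|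
      (h j).trans (congrArg (fun q : AlgebraHom _ _ => q.app _ y)
        (hc.conePointUniqueUpToIso_hom_comp (limitConeIsLimit K) j)).symm
  have hinv : ∀ z : c.pt.X PUnit.unit, e.inv.app _ (e.hom.app _ z) = z := fun z =>
    congrArg (fun q : AlgebraHom _ _ => q.app PUnit.unit z) e.hom_inv_id
  rw [← hinv x, ← hinv y, he]

end Algebra

section Causality

variable {P : Operad.{u} PUnit} {D : Type u} [Category.{u} D]

lemma AlgebraHom.app_pairFam {A B : Algebra P} (f : AlgebraHom A B) (x y : A.X PUnit.unit) :
    (fun i => f.app _ (pairFam (P := A.X) x y i)) =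
      pairFam (P := B.X) (f.app _ x) (f.app _ y) := by
  funext i
  match i with
  | ⟨0, _⟩ => rfl
  | ⟨1, _⟩ => rfl
  | ⟨_ + 2, h⟩ => exact absurd h (by simp)

lemma NatTrans.app_map_app {F G : D ⥤ Algebra P} (α : F ⟶ G) {c t : D} (f : c ⟶ t)
    (x : (F.obj c).X PUnit.unit) :
    (α.app t).app _ ((F.map f).app _ x) = (G.map f).app _ ((α.app c).app _ x) :=
  congrArg (fun q : AlgebraHom _ _ => q.app _ x) (α.naturality f)

lemma NatTrans.app_action_pairFam {F G : D ⥤ Algebra P} (α : F ⟶ G)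
    (ρ : P.Op [PUnit.unit, PUnit.unit] PUnit.unit) {c₁ c₂ t : D} (f₁ : c₁ ⟶ t) (f₂ : c₂ ⟶ t)
    (x : (F.obj c₁).X PUnit.unit) (y : (F.obj c₂).X PUnit.unit) :
    (α.app t).app _ ((F.obj t).action ρ
        (pairFam (P := (F.obj t).X) ((F.map f₁).app _ x) ((F.map f₂).app _ y))) =
      (G.obj t).action ρ (pairFam (P := (G.obj t).X)
        ((G.map f₁).app _ ((α.app c₁).app _ x)) ((G.map f₂).app _ ((α.app c₂).app _ y))) := by
  rw [(α.app t).naturality, AlgebraHom.app_pairFam, NatTrans.app_map_app, NatTrans.app_map_app]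

variable {orth : OrthRel D} {r₁ r₂ : P.Op [PUnit.unit, PUnit.unit] PUnit.unit}

lemma isCausal_of_jointly_injective {ι : Type*} {F : D ⥤ Algebra P} {G : ι → D ⥤ Algebra P}
    (α : ∀ i, F ⟶ G i)
    (hα : ∀ t (x y : (F.obj t).X PUnit.unit),
      (∀ i, ((α i).app t).app _ x = ((α i).app t).app _ y) → x = y)
    (hG : ∀ i, IsCausal orth r₁ r₂ (G i)) : IsCausal orth r₁ r₂ F := by
  intro c₁ c₂ t f₁ f₂ hf x y
  refine hα t _ _ fun i => ?_
  rw [NatTrans.app_action_pairFam, NatTrans.app_action_pairFam]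
  exact hG i f₁ f₂ hf _ _

instance {J : Type u} [Category.{u} J] :
    ObjectProperty.IsClosedUnderLimitsOfShape (IsCausal orth r₁ r₂ (P := P)) J where
  limitsOfShape_le := by
    rintro F ⟨p⟩
    exact isCausal_of_jointly_injective p.π.app
      (fun t _ _ => Algebra.eq_of_isLimit (isLimitOfPreserves ((evaluation D _).obj t) p.isLimit))
      p.prop_diag_obj

instance : HasLimits (FT D orth r₁ r₂) :=
  ⟨fun _ _ => inferInstance⟩

end Causality

section Restriction

variable {C : Type u} [SmallCategory C] (W : MorphismProperty C) (orth : OrthRel C)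
  {P : Operad.{u} PUnit} (r₁ r₂ : P.Op [PUnit.unit, PUnit.unit] PUnit.unit)

noncomputable abbrev restrictLocFT :
    FT W.Localization (locOrthRel W orth) r₁ r₂ ⥤ FT C orth r₁ r₂ :=
  restrictFT (oC := orth) (oD := locOrthRel W orth) r₁ r₂ W.Q
    (fun f₁ f₂ h => locOrth.base f₁ f₂ h)

instance : (restrictLocFT W orth r₁ r₂).Faithful where
  map_injective h := by
    have h' := congrArg InducedCategory.Hom.hom h
    exact InducedCategory.hom_ext <|
      (Localization.faithful_whiskeringLeft W.Q W (Algebra P)).map_injective h'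

instance : (restrictLocFT W orth r₁ r₂).Full where
  map_surjective τ := by
    obtain ⟨σ, hσ⟩ := (Localization.full_whiskeringLeft W.Q W (Algebra P)).map_surjective τ.hom
    exact ⟨InducedCategory.homMk σ, InducedCategory.hom_ext hσ⟩

instance : PreservesLimits (restrictLocFT W orth r₁ r₂) := by
  have : PreservesLimits (ObjectProperty.ι (IsCausal (locOrthRel W orth) r₁ r₂ (P := P))) :=
    ⟨inferInstance⟩
  have : PreservesLimits (restrictLocFT W orth r₁ r₂ ⋙ ObjectProperty.ι _) :=
    inferInstanceAs (PreservesLimits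
      (ObjectProperty.ι _ ⋙ (Functor.whiskeringLeft C W.Localization (Algebra P)).obj W.Q))
  exact preservesLimits_of_reflects_of_preserves _ (ObjectProperty.ι (IsCausal orth r₁ r₂))

end Restriction

section SubFunctor

variable {P : Operad.{u} PUnit} {D : Type u} [Category.{u} D] (F : D ⥤ Algebra P)
  (S : ∀ d, Set ((F.obj d).X PUnit.unit))
  (hact : ∀ d {cs : List PUnit} (o : P.Op cs PUnit.unit) (as : ∀ i, (F.obj d).X (cs.get i)),
    (∀ i, as i ∈ S d) → (F.obj d).action o as ∈ S d)
  (hmap : ∀ {d d' : D} (g : d ⟶ d') (x : (F.obj d).X PUnit.unit),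
    x ∈ S d → (F.map g).app _ x ∈ S d')

def subFunctor : D ⥤ Algebra P where
  obj d := (F.obj d).sub (S d) (hact d)
  map g := ⟨fun _ x => ⟨(F.map g).app _ x.1, hmap g _ x.2⟩,
    fun o _ => Subtype.ext ((F.map g).naturality o _)⟩
  map_id d := AlgebraHom.ext <| funext fun _ => funext fun x => Subtype.ext <|
    congrArg (fun q : AlgebraHom _ _ => q.app _ x.1) (F.map_id d)
  map_comp g g' := AlgebraHom.ext <| funext fun _ => funext fun x => Subtype.ext <|
    congrArg (fun q : AlgebraHom _ _ => q.app _ x.1) (F.map_comp g g')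

def subFunctorι : subFunctor F S hact hmap ⟶ F where
  app d := Algebra.sub.ι (F.obj d) (S d) (hact d)

lemma isCausal_subFunctor {orth : OrthRel D} {r₁ r₂ : P.Op [PUnit.unit, PUnit.unit] PUnit.unit}
    (hF : IsCausal orth r₁ r₂ F) : IsCausal orth r₁ r₂ (subFunctor F S hact hmap) :=
  isCausal_of_jointly_injective (ι := Unit) (fun _ => subFunctorι F S hact hmap)
    (fun _ _ _ h => Subtype.ext (h ())) fun _ => hF

end SubFunctor

section Terms

variable {C : Type u} [SmallCategory C] {W : MorphismProperty C} {P : Operad.{u} PUnit}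

inductive LocTerm (W : MorphismProperty C) (A : C ⥤ Algebra P) : W.Localization → Type u
  | base (c : C) (x : (A.obj c).X PUnit.unit) : LocTerm W A (W.Q.obj c)
  | ops {d : W.Localization} (cs : List PUnit.{u + 1}) (o : P.Op cs PUnit.unit)
      (ts : Fin cs.length → LocTerm W A d) : LocTerm W A d
  | map {d d' : W.Localization} (g : d ⟶ d') (t : LocTerm W A d) : LocTerm W A d'

variable {A : C ⥤ Algebra P}

def LocTerm.eval (B : W.Localization ⥤ Algebra P) (h : A ⟶ W.Q ⋙ B) :
    ∀ {d : W.Localization}, LocTerm W A d → (B.obj d).X PUnit.unit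
  | _, .base c x => (h.app c).app _ x
  | _, .ops _ o ts => (B.obj _).action o fun i => (ts i).eval B h
  | _, .map g t => (B.map g).app _ (t.eval B h)

def LocTerm.ker (B : W.Localization ⥤ Algebra P) (h : A ⟶ W.Q ⋙ B) :
    ∀ d, LocTerm W A d → LocTerm W A d → Prop :=
  fun _ t t' => t.eval B h = t'.eval B h

variable (B : W.Localization ⥤ Algebra P) (h : A ⟶ W.Q ⋙ B)

lemma LocTerm.action_mem_range_eval (d : W.Localization) {cs : List PUnit}
    (o : P.Op cs PUnit.unit) (as : ∀ i, (B.obj d).X (cs.get i))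
    (has : ∀ i, as i ∈ Set.range (LocTerm.eval B h (d := d))) :
    (B.obj d).action o as ∈ Set.range (LocTerm.eval B h) := by
  choose ts hts using has
  exact ⟨.ops cs o ts, congrArg _ (funext hts)⟩

lemma LocTerm.map_mem_range_eval {d d' : W.Localization} (g : d ⟶ d')
    (x : (B.obj d).X PUnit.unit) (hx : x ∈ Set.range (LocTerm.eval B h)) :
    (B.map g).app _ x ∈ Set.range (LocTerm.eval B h) := by
  obtain ⟨t, rfl⟩ := hx
  exact ⟨.map g t, rfl⟩

noncomputable def imageFunctor : W.Localization ⥤ Algebra P :=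
  subFunctor B _ (LocTerm.action_mem_range_eval B h) (LocTerm.map_mem_range_eval B h)

lemma isCausal_imageFunctor {orth : OrthRel W.Localization}
    {r₁ r₂ : P.Op [PUnit.unit, PUnit.unit] PUnit.unit} (hB : IsCausal orth r₁ r₂ B) :
    IsCausal orth r₁ r₂ (imageFunctor B h) :=
  isCausal_subFunctor _ _ _ _ hB

noncomputable def toImageFunctor : A ⟶ W.Q ⋙ imageFunctor B h where
  app c := ⟨fun _ x => ⟨(h.app c).app _ x, .base c x, rfl⟩,
    fun o as => Subtype.ext ((h.app c).naturality o as)⟩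
  naturality _ _ f := AlgebraHom.ext <| funext fun _ => funext fun x => Subtype.ext <|
    congrArg (fun q : AlgebraHom _ _ => q.app _ x) (h.naturality f)

variable {B h}

lemma exists_imageFunctor_desc {X : W.Localization ⥤ Algebra P} (k : A ⟶ W.Q ⋙ X)
    (hker : ∀ d, ∀ t t' : LocTerm W A d, t.eval B h = t'.eval B h → t.eval X k = t'.eval X k) :
    ∃ g : imageFunctor B h ⟶ X, toImageFunctor B h ≫ Functor.whiskerLeft W.Q g = k := by
  have hchoose : ∀ {d} (b : ((imageFunctor B h).obj d).X PUnit.unit) (t : LocTerm W A d),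
      t.eval B h = b.1 → b.2.choose.eval X k = t.eval X k :=
    fun b t ht => hker _ _ _ (b.2.choose_spec.trans ht.symm)
  refine ⟨⟨fun d => ⟨fun _ b => b.2.choose.eval X k, fun {cs _} o as => ?_⟩, ?_⟩, ?_⟩
  · exact hchoose _ (.ops cs o fun i => (as i).2.choose)
      (congrArg _ (funext fun i => (as i).2.choose_spec))
  · intro d d' g
    exact AlgebraHom.ext <| funext fun _ => funext fun b =>
      hchoose _ (.map g b.2.choose) (congrArg _ b.2.choose_spec)
  · exact NatTrans.ext <| funext fun c => AlgebraHom.ext <| funext fun _ => funext fun x =>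
      hchoose _ (.base c x) rfl

end Terms

section SolutionSet

variable {C : Type u} [SmallCategory C] (W : MorphismProperty C) (orth : OrthRel C)
  {P : Operad.{u} PUnit} (r₁ r₂ : P.Op [PUnit.unit, PUnit.unit] PUnit.unit)

lemma solutionSetCondition_restrictLocFT :
    SolutionSetCondition.{u} (restrictLocFT W orth r₁ r₂) := by
  intro A
  let I := Set.range fun p : Σ B : FT W.Localization (locOrthRel W orth) r₁ r₂,
    A.obj ⟶ W.Q ⋙ B.obj => LocTerm.ker p.1.obj p.2
  refine ⟨I, fun i => ⟨imageFunctor i.2.choose.1.obj i.2.choose.2,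
      isCausal_imageFunctor _ _ i.2.choose.1.property⟩,
    fun i => InducedCategory.homMk (toImageFunctor _ _), fun X k => ?_⟩
  let i : I := ⟨_, ⟨X, k.hom⟩, rfl⟩
  obtain ⟨g, hg⟩ := exists_imageFunctor_desc (B := i.2.choose.1.obj) (h := i.2.choose.2) k.hom
    fun d t t' => (congrFun (congrFun (congrFun i.2.choose_spec d) t) t').mp
  exact ⟨i, InducedCategory.homMk g, InducedCategory.hom_ext hg⟩

end SolutionSet

/-- If `L : C̄ → C̄[W⁻¹]` is an orthogonal localization, then
the pullback functor `L* : FT(C̄[W⁻¹],P,rᵢ) → FT(C̄,P,rᵢ)` is fully faithful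
and has a left adjoint `L_!` whose counit `L_! L* A → A` is a natural
isomorphism; i.e. it exhibits `FT(C̄[W⁻¹],P,rᵢ)` as a full reflective
subcategory of `FT(C̄,P,rᵢ)`. -/
theorem localization_reflective
    (C : Type u) [SmallCategory C] (W : CategoryTheory.MorphismProperty C)
    (orth : OrthRel C) (P : Operad.{u} PUnit)
    (r₁ r₂ : P.Op [PUnit.unit, PUnit.unit] PUnit.unit) :
    (restrictFT (oC := orth) (oD := locOrthRel W orth) r₁ r₂ W.Q
        (fun f₁ f₂ h => locOrth.base f₁ f₂ h)).Full ∧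
    (restrictFT (oC := orth) (oD := locOrthRel W orth) r₁ r₂ W.Q
        (fun f₁ f₂ h => locOrth.base f₁ f₂ h)).Faithful ∧
    ∃ (Lshriek : FT C orth r₁ r₂ ⥤ FT W.Localization (locOrthRel W orth) r₁ r₂)
      (adj : Lshriek ⊣ restrictFT (oC := orth) (oD := locOrthRel W orth) r₁ r₂ W.Q
        (fun f₁ f₂ h => locOrth.base f₁ f₂ h)),
      IsIso adj.counit := by
  have := isRightAdjoint_of_preservesLimits_of_solutionSetCondition _
    (solutionSetCondition_restrictLocFT W orth r₁ r₂)
  exact ⟨inferInstance, inferInstance, _, Adjunction.ofIsRightAdjoint _, inferInstance⟩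

end AQFT
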